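/- Let (X₁,Y₁) and (X₂,Y₂) be random vectors taking values in the unit square [0,1]×[0,1], with cdfs F₁ and F₂, marginal cdfs Fᵢ^X(x) = Fᵢ(x,1) and Fᵢ^Y(y) = Fᵢ(1,y), and associated functions Kᵢ(s,t) = Fᵢ^X(s) + Fᵢ^Y(t) − Fᵢ(s,t) for i = 1,2. If K₁(s,t) ≤ K₂(s,t), F₁^X(s) ≤ F₂^X(s), and F₁^Y(t) ≤ F₂^Y(t) for all (s,t) ∈ [0,1]×[0,1], then for every function φ : ℝ² → ℝ which is C² on an open connected set Ω containing [0,1]×[0,1], increasing (nondecreasing) in each of its arguments, and supermodular (∂²φ/∂x∂y ≥ 0 on Ω), one has E[φ(X₁,Y₁)] ≥ E[φ(X₂,Y₂)]. -/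

import Mathlib

/-!
By the fundamental theorem of calculus in each variable, for `(x, y)` in the unit square
`φ(x,y) = φ(0,0) + ∫₀ˣ ∂₁φ(s,0) ds + ∫₀ʸ ∂₂φ(0,t) dt + ∫₀ʸ ∫₀ˣ ∂₁∂₂φ(s,t) ds dt`.
Writing these as integrals over `[0,1]` restricted to `s < x`, `t < y`, taking expectations and
applying Fubini gives
`E φ(X,Y) = φ(0,0) + ∫ ∂₁φ(s,0) P(s < X) ds + ∫ ∂₂φ(0,t) P(t < Y) dt
  + ∫∫ ∂₁∂₂φ(s,t) P(s < X, t < Y) ds dt`.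
The three survival functions are `1 - F^X`, `1 - F^Y` and `1 - K`, and the three derivatives are
nonnegative, so the hypotheses compare the two expectations term by term.
-/

open Set MeasureTheory

noncomputable def partialFst (f : ℝ × ℝ → ℝ) (q : ℝ × ℝ) : ℝ := fderiv ℝ f q (1, 0)

noncomputable def partialSnd (f : ℝ × ℝ → ℝ) (q : ℝ × ℝ) : ℝ := fderiv ℝ f q (0, 1)

section Calculus

variable {f : ℝ × ℝ → ℝ} {U : Set (ℝ × ℝ)}

theorem DifferentiableAt.hasDerivAt_partialFst {q : ℝ × ℝ} (h : DifferentiableAt ℝ f q) :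
    HasDerivAt (fun x => f (x, q.2)) (partialFst f q) q.1 :=
  h.hasFDerivAt.comp_hasDerivAt q.1 ((hasDerivAt_id _).prodMk (hasDerivAt_const _ _))

theorem DifferentiableAt.hasDerivAt_partialSnd {q : ℝ × ℝ} (h : DifferentiableAt ℝ f q) :
    HasDerivAt (fun y => f (q.1, y)) (partialSnd f q) q.2 :=
  h.hasFDerivAt.comp_hasDerivAt q.2 ((hasDerivAt_const _ _).prodMk (hasDerivAt_id _))

variable {m n : WithTop ℕ∞}

theorem contDiffOn_partialFst (hU : IsOpen U) (hf : ContDiffOn ℝ n f U) (hmn : m + 1 ≤ n) :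
    ContDiffOn ℝ m (partialFst f) U :=
  (hf.fderiv_of_isOpen hU hmn).clm_apply contDiffOn_const

theorem contDiffOn_partialSnd (hU : IsOpen U) (hf : ContDiffOn ℝ n f U) (hmn : m + 1 ≤ n) :
    ContDiffOn ℝ m (partialSnd f) U :=
  (hf.fderiv_of_isOpen hU hmn).clm_apply contDiffOn_const

theorem integral_partialFst (hU : IsOpen U) (hf : ContDiffOn ℝ 1 f U) {a b t : ℝ}
    (h : ∀ s ∈ uIcc a b, (s, t) ∈ U) :
    ∫ s in a..b, partialFst f (s, t) = f (b, t) - f (a, t) := by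
  have hcont : ContinuousOn (fun s => partialFst f (s, t)) (uIcc a b) :=
    (contDiffOn_partialFst hU hf (m := 0) (by simp)).continuousOn.comp (by fun_prop) h
  refine intervalIntegral.integral_eq_sub_of_hasDerivAt (f := fun s => f (s, t))
    (fun s hs => ?_) hcont.intervalIntegrable
  exact ((hf.contDiffAt (hU.mem_nhds (h s hs))).differentiableAt one_ne_zero).hasDerivAt_partialFst

theorem integral_partialSnd (hU : IsOpen U) (hf : ContDiffOn ℝ 1 f U) {a b x : ℝ}
    (h : ∀ t ∈ uIcc a b, (x, t) ∈ U) :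
    ∫ t in a..b, partialSnd f (x, t) = f (x, b) - f (x, a) := by
  have hcont : ContinuousOn (fun t => partialSnd f (x, t)) (uIcc a b) :=
    (contDiffOn_partialSnd hU hf (m := 0) (by simp)).continuousOn.comp (by fun_prop) h
  refine intervalIntegral.integral_eq_sub_of_hasDerivAt (f := fun t => f (x, t))
    (fun t ht => ?_) hcont.intervalIntegrable
  exact ((hf.contDiffAt (hU.mem_nhds (h t ht))).differentiableAt one_ne_zero).hasDerivAt_partialSnd

theorem integral_integral_partialFst_partialSnd (hU : IsOpen U) (hf : ContDiffOn ℝ 2 f U)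
    {a b c d : ℝ} (h : uIcc a b ×ˢ uIcc c d ⊆ U) :
    ∫ t in c..d, ∫ s in a..b, partialFst (partialSnd f) (s, t)
      = f (b, d) - f (b, c) - (f (a, d) - f (a, c)) := by
  have hf' : ContDiffOn ℝ 1 (partialSnd f) U := contDiffOn_partialSnd hU hf (by norm_num)
  have hb : ∀ t ∈ uIcc c d, (b, t) ∈ U := fun t ht => h ⟨right_mem_uIcc, ht⟩
  have ha : ∀ t ∈ uIcc c d, (a, t) ∈ U := fun t ht => h ⟨left_mem_uIcc, ht⟩
  calc ∫ t in c..d, ∫ s in a..b, partialFst (partialSnd f) (s, t)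
      = ∫ t in c..d, (partialSnd f (b, t) - partialSnd f (a, t)) :=
        intervalIntegral.integral_congr fun t ht =>
          integral_partialFst hU hf' fun s hs => h ⟨hs, ht⟩
    _ = f (b, d) - f (b, c) - (f (a, d) - f (a, c)) := by
      have hcont : ∀ x, (∀ t ∈ uIcc c d, (x, t) ∈ U) →
          IntervalIntegrable (fun t => partialSnd f (x, t)) volume c d := fun x hx =>
        (hf'.continuousOn.comp (by fun_prop) hx).intervalIntegrable
      rw [intervalIntegral.integral_sub (hcont b hb) (hcont a ha),
        integral_partialSnd hU (hf.of_le (by norm_num)) hb,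
        integral_partialSnd hU (hf.of_le (by norm_num)) ha]

theorem eq_add_integral_partials (hU : IsOpen U)
    (hf : ContDiffOn ℝ 2 f U) {a c x y : ℝ} (h : uIcc a x ×ˢ uIcc c y ⊆ U) :
    f (x, y) = f (a, c) + (∫ s in a..x, partialFst f (s, c)) + (∫ t in c..y, partialSnd f (a, t))
      + ∫ t in c..y, ∫ s in a..x, partialFst (partialSnd f) (s, t) := by
  rw [integral_partialFst hU (hf.of_le (by norm_num)) fun s hs => h ⟨hs, left_mem_uIcc⟩,
    integral_partialSnd hU (hf.of_le (by norm_num)) fun t ht => h ⟨left_mem_uIcc, ht⟩,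
    integral_integral_partialFst_partialSnd hU hf h]
  ring

theorem partialFst_partialSnd_eq_deriv_deriv (hU : IsOpen U) (hf : ContDiffOn ℝ 2 f U)
    {q : ℝ × ℝ} (hq : q ∈ U) :
    partialFst (partialSnd f) q = deriv (fun x => deriv (fun y => f (x, y)) q.2) q.1 := by
  have hline : ∀ᶠ x in nhds q.1, (x, q.2) ∈ U :=
    (continuous_id.prodMk continuous_const).continuousAt.preimage_mem_nhds (hU.mem_nhds hq)
  have hderiv : (fun x => deriv (fun y => f (x, y)) q.2) =ᶠ[nhds q.1]
      fun x => partialSnd f (x, q.2) := by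
    filter_upwards [hline] with x hx
    exact ((hf.contDiffAt (hU.mem_nhds hx)).differentiableAt two_ne_zero)
      |>.hasDerivAt_partialSnd.deriv
  rw [hderiv.deriv_eq]
  exact (((contDiffOn_partialSnd hU hf le_rfl).contDiffAt (hU.mem_nhds hq)).differentiableAt
    one_ne_zero).hasDerivAt_partialFst.deriv.symm

end Calculus

section RandomSet

variable {Ω β : Type*} [MeasurableSpace Ω] [MeasurableSpace β] (P : Measure Ω) [IsFiniteMeasure P]
  {μ : Measure β} [SFinite μ] {T : Ω → Set β} {g : β → ℝ}

theorem integrable_indicator_graph (hT : MeasurableSet {p : Ω × β | p.2 ∈ T p.1})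
    (hg : Integrable g μ) :
    Integrable ({p : Ω × β | p.2 ∈ T p.1}.indicator fun p => g p.2) (P.prod μ) :=
  (hg.comp_snd P).indicator hT

theorem integrable_setIntegral_of_measurableSet (hT : MeasurableSet {p : Ω × β | p.2 ∈ T p.1})
    (hg : Integrable g μ) : Integrable (fun ω => ∫ b in T ω, g b ∂μ) P :=
  (integrable_indicator_graph P hT hg).integral_prod_left.congr <| ae_of_all _ fun _ =>
    integral_indicator (measurable_prodMk_left hT)

theorem integrable_measureReal_mul (hT : MeasurableSet {p : Ω × β | p.2 ∈ T p.1})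
    (hg : Integrable g μ) : Integrable (fun b => P.real {ω | b ∈ T ω} * g b) μ :=
  (integrable_indicator_graph P hT hg).integral_prod_right.congr <| ae_of_all _ fun b =>
    integral_indicator_const (g b) (measurable_prodMk_right hT)

theorem integral_setIntegral_eq_integral_measureReal_mul
    (hT : MeasurableSet {p : Ω × β | p.2 ∈ T p.1}) (hg : Integrable g μ) :
    ∫ ω, ∫ b in T ω, g b ∂μ ∂P = ∫ b, P.real {ω | b ∈ T ω} * g b ∂μ := by
  have hint := integrable_indicator_graph P hT hg
  calc ∫ ω, ∫ b in T ω, g b ∂μ ∂P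
      = ∫ ω, ∫ b, {p : Ω × β | p.2 ∈ T p.1}.indicator (fun p => g p.2) (ω, b) ∂μ ∂P :=
        integral_congr_ae <| ae_of_all _ fun _ =>
          (integral_indicator (measurable_prodMk_left hT)).symm
    _ = ∫ b, ∫ ω, {p : Ω × β | p.2 ∈ T p.1}.indicator (fun p => g p.2) (ω, b) ∂P ∂μ :=
        integral_integral_swap hint
    _ = ∫ b, P.real {ω | b ∈ T ω} * g b ∂μ :=
        integral_congr_ae <| ae_of_all _ fun b =>
          integral_indicator_const (g b) (measurable_prodMk_right hT)

theorem integral_measureReal_mul_mono {Ω' : Type*} [MeasurableSpace Ω'] (Q : Measure Ω')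
    {T' : Ω' → Set β} (hT : MeasurableSet {p : Ω × β | p.2 ∈ T p.1}) (hg : Integrable g μ)
    (hg₀ : ∀ᵐ b ∂μ, 0 ≤ g b) (hle : ∀ᵐ b ∂μ, Q.real {ω | b ∈ T' ω} ≤ P.real {ω | b ∈ T ω}) :
    ∫ b, Q.real {ω | b ∈ T' ω} * g b ∂μ ≤ ∫ b, P.real {ω | b ∈ T ω} * g b ∂μ := by
  refine integral_mono_of_nonneg ?_ (integrable_measureReal_mul P hT hg) ?_
  · filter_upwards [hg₀] with b hb using mul_nonneg measureReal_nonneg hb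
  · filter_upwards [hg₀, hle] with b hb hb' using mul_le_mul_of_nonneg_right hb' hb

theorem measurableSet_mem_Iio {h : Ω → ℝ} (hh : Measurable h) :
    MeasurableSet {p : Ω × ℝ | p.2 ∈ Iio (h p.1)} :=
  measurableSet_lt measurable_snd (hh.comp measurable_fst)

theorem measurableSet_mem_Iio_prod_Iio {h₁ h₂ : Ω → ℝ} (hh₁ : Measurable h₁) (hh₂ : Measurable h₂) :
    MeasurableSet {p : Ω × (ℝ × ℝ) | p.2 ∈ Iio (h₁ p.1) ×ˢ Iio (h₂ p.1)} :=
  (measurableSet_lt measurable_snd.fst (hh₁.comp measurable_fst)).inter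
    (measurableSet_lt measurable_snd.snd (hh₂.comp measurable_fst))

end RandomSet

theorem setIntegral_Iio_restrict_Icc {a b x : ℝ} (hx : x ∈ Icc a b) (g : ℝ → ℝ) :
    ∫ s in Iio x, g s ∂(volume.restrict (Icc a b)) = ∫ s in a..x, g s := by
  have hset : Iio x ∩ Icc a b = Ico a x := by
    ext s; simp only [mem_inter_iff, mem_Iio, mem_Icc, mem_Ico]
    constructor
    · rintro ⟨h, h', -⟩; exact ⟨h', h⟩
    · rintro ⟨h', h⟩; exact ⟨h, h', h.le.trans hx.2⟩
  rw [Measure.restrict_restrict measurableSet_Iio, hset, integral_Ico_eq_integral_Ioc,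
    intervalIntegral.integral_of_le hx.1]

theorem setIntegral_Iio_prod_Iio_restrict_Icc {a b c d x y : ℝ} (hx : x ∈ Icc a b)
    (hy : y ∈ Icc c d) {g : ℝ × ℝ → ℝ}
    (hg : Integrable g ((volume.restrict (Icc a b)).prod (volume.restrict (Icc c d)))) :
    ∫ q in Iio x ×ˢ Iio y, g q ∂((volume.restrict (Icc a b)).prod (volume.restrict (Icc c d)))
      = ∫ t in c..y, ∫ s in a..x, g (s, t) := by
  have hg' := hg.integrableOn (s := Iio x ×ˢ Iio y)
  rw [IntegrableOn, ← Measure.prod_restrict] at hg'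
  rw [← Measure.prod_restrict, integral_prod_symm _ hg', setIntegral_Iio_restrict_Icc hy]
  simp only [setIntegral_Iio_restrict_Icc hx]

section UnitSquare

variable {f : ℝ × ℝ → ℝ} {U : Set (ℝ × ℝ)} (hU : IsOpen U) (hf : ContDiffOn ℝ 2 f U)
  (hsq : Icc 0 1 ×ˢ Icc 0 1 ⊆ U)
include hU hf hsq

theorem integrable_partialFst_mk_zero :
    Integrable (fun s => partialFst f (s, 0)) (volume.restrict (Icc 0 1)) :=
  ((contDiffOn_partialFst hU hf (m := 0) (by norm_num)).continuousOn.comp (by fun_prop)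
    fun s hs => hsq ⟨hs, left_mem_Icc.2 zero_le_one⟩).integrableOn_compact isCompact_Icc

theorem integrable_partialSnd_zero_mk :
    Integrable (fun t => partialSnd f (0, t)) (volume.restrict (Icc 0 1)) :=
  ((contDiffOn_partialSnd hU hf (m := 0) (by norm_num)).continuousOn.comp (by fun_prop)
    fun t ht => hsq ⟨left_mem_Icc.2 zero_le_one, ht⟩).integrableOn_compact isCompact_Icc

theorem integrable_partialFst_partialSnd :
    Integrable (partialFst (partialSnd f))
      ((volume.restrict (Icc 0 1)).prod (volume.restrict (Icc 0 1))) := by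
  rw [Measure.prod_restrict, ← Measure.volume_eq_prod]
  exact ((contDiffOn_partialFst hU (contDiffOn_partialSnd hU hf (m := 1) (by norm_num))
    (m := 0) (by norm_num)).continuousOn.mono hsq).integrableOn_compact
    (isCompact_Icc.prod isCompact_Icc)

theorem eq_add_setIntegral_partials {x y : ℝ} (hx : x ∈ Icc 0 1) (hy : y ∈ Icc 0 1) :
    f (x, y) = f (0, 0) + (∫ s in Iio x, partialFst f (s, 0) ∂volume.restrict (Icc 0 1))
      + (∫ t in Iio y, partialSnd f (0, t) ∂volume.restrict (Icc 0 1))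
      + ∫ q in Iio x ×ˢ Iio y, partialFst (partialSnd f) q
          ∂(volume.restrict (Icc 0 1)).prod (volume.restrict (Icc 0 1)) := by
  rw [setIntegral_Iio_restrict_Icc hx, setIntegral_Iio_restrict_Icc hy,
    setIntegral_Iio_prod_Iio_restrict_Icc hx hy (integrable_partialFst_partialSnd hU hf hsq)]
  refine eq_add_integral_partials hU hf (subset_trans ?_ hsq)
  rw [uIcc_of_le hx.1, uIcc_of_le hy.1]
  exact prod_mono (Icc_subset_Icc_right hx.2) (Icc_subset_Icc_right hy.2)

variable {Ω : Type*} [MeasurableSpace Ω] (P : Measure Ω) [IsProbabilityMeasure P]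
  {X : Ω → ℝ × ℝ} (hX : Measurable X)
include hX

theorem integral_comp_eq_add_integral_survival (hXsq : ∀ ω, X ω ∈ Icc 0 1 ×ˢ Icc 0 1) :
    ∫ ω, f (X ω) ∂P = f (0, 0)
      + (∫ s, P.real {ω | s < (X ω).1} * partialFst f (s, 0) ∂volume.restrict (Icc 0 1))
      + (∫ t, P.real {ω | t < (X ω).2} * partialSnd f (0, t) ∂volume.restrict (Icc 0 1))
      + ∫ q, P.real {ω | q.1 < (X ω).1 ∧ q.2 < (X ω).2} * partialFst (partialSnd f) q
          ∂(volume.restrict (Icc 0 1)).prod (volume.restrict (Icc 0 1)) := by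
  have hT₁ := measurableSet_mem_Iio hX.fst
  have hT₂ := measurableSet_mem_Iio hX.snd
  have hT₁₂ := measurableSet_mem_Iio_prod_Iio hX.fst hX.snd
  have hg₁ := integrable_partialFst_mk_zero hU hf hsq
  have hg₂ := integrable_partialSnd_zero_mk hU hf hsq
  have hg₁₂ := integrable_partialFst_partialSnd hU hf hsq
  have hI₁ := integrable_setIntegral_of_measurableSet P (T := fun ω => Iio (X ω).1) hT₁ hg₁
  have hI₂ := integrable_setIntegral_of_measurableSet P (T := fun ω => Iio (X ω).2) hT₂ hg₂
  have hI₁₂ := integrable_setIntegral_of_measurableSet P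
    (T := fun ω => Iio (X ω).1 ×ˢ Iio (X ω).2) hT₁₂ hg₁₂
  rw [integral_congr_ae (ae_of_all _ fun ω =>
      eq_add_setIntegral_partials hU hf hsq (hXsq ω).1 (hXsq ω).2),
    integral_add ?_ hI₁₂, integral_add ?_ hI₂, integral_add (integrable_const _) hI₁,
    integral_setIntegral_eq_integral_measureReal_mul P (T := fun ω => Iio (X ω).1) hT₁ hg₁,
    integral_setIntegral_eq_integral_measureReal_mul P (T := fun ω => Iio (X ω).2) hT₂ hg₂,
    integral_setIntegral_eq_integral_measureReal_mul P
      (T := fun ω => Iio (X ω).1 ×ˢ Iio (X ω).2) hT₁₂ hg₁₂, integral_const]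
  · simp only [mem_Iio, mem_prod, probReal_univ, one_smul]
  · exact (integrable_const _).add hI₁
  · exact ((integrable_const _).add hI₁).add hI₂

theorem integral_comp_le_of_survival_le
    (h₁ : ∀ s ∈ Icc (0 : ℝ) 1, 0 ≤ partialFst f (s, 0))
    (h₂ : ∀ t ∈ Icc (0 : ℝ) 1, 0 ≤ partialSnd f (0, t))
    (h₁₂ : ∀ q ∈ Icc (0 : ℝ) 1 ×ˢ Icc (0 : ℝ) 1, 0 ≤ partialFst (partialSnd f) q)
    (hXsq : ∀ ω, X ω ∈ Icc 0 1 ×ˢ Icc 0 1)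
    {Ω' : Type*} [MeasurableSpace Ω'] (Q : Measure Ω') [IsProbabilityMeasure Q]
    {Y : Ω' → ℝ × ℝ} (hY : Measurable Y) (hYsq : ∀ ω, Y ω ∈ Icc 0 1 ×ˢ Icc 0 1)
    (hle₁ : ∀ s ∈ Icc (0 : ℝ) 1, Q.real {ω | s < (Y ω).1} ≤ P.real {ω | s < (X ω).1})
    (hle₂ : ∀ t ∈ Icc (0 : ℝ) 1, Q.real {ω | t < (Y ω).2} ≤ P.real {ω | t < (X ω).2})
    (hle₁₂ : ∀ q ∈ Icc (0 : ℝ) 1 ×ˢ Icc (0 : ℝ) 1,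
      Q.real {ω | q.1 < (Y ω).1 ∧ q.2 < (Y ω).2} ≤ P.real {ω | q.1 < (X ω).1 ∧ q.2 < (X ω).2}) :
    ∫ ω, f (Y ω) ∂Q ≤ ∫ ω, f (X ω) ∂P := by
  have hsq₁ : ∀ᵐ s ∂volume.restrict (Icc (0 : ℝ) 1), s ∈ Icc (0 : ℝ) 1 :=
    ae_restrict_mem measurableSet_Icc
  have hsq₂ : ∀ᵐ q ∂(volume.restrict (Icc (0 : ℝ) 1)).prod (volume.restrict (Icc (0 : ℝ) 1)),
      q ∈ Icc (0 : ℝ) 1 ×ˢ Icc (0 : ℝ) 1 := by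
    rw [Measure.prod_restrict]
    exact ae_restrict_mem (measurableSet_Icc.prod measurableSet_Icc)
  rw [integral_comp_eq_add_integral_survival hU hf hsq P hX hXsq,
    integral_comp_eq_add_integral_survival hU hf hsq Q hY hYsq]
  gcongr f (0, 0) + ?_ + ?_ + ?_
  · exact integral_measureReal_mul_mono P Q (T := fun ω => Iio (X ω).1)
      (T' := fun ω => Iio (Y ω).1) (measurableSet_mem_Iio hX.fst)
      (integrable_partialFst_mk_zero hU hf hsq) (hsq₁.mono h₁) (hsq₁.mono hle₁)
  · exact integral_measureReal_mul_mono P Q (T := fun ω => Iio (X ω).2)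
      (T' := fun ω => Iio (Y ω).2) (measurableSet_mem_Iio hX.snd)
      (integrable_partialSnd_zero_mk hU hf hsq) (hsq₁.mono h₂) (hsq₁.mono hle₂)
  · exact integral_measureReal_mul_mono P Q (T := fun ω => Iio (X ω).1 ×ˢ Iio (X ω).2)
      (T' := fun ω => Iio (Y ω).1 ×ˢ Iio (Y ω).2) (measurableSet_mem_Iio_prod_Iio hX.fst hX.snd)
      (integrable_partialFst_partialSnd hU hf hsq) (hsq₂.mono h₁₂) (hsq₂.mono hle₁₂)

end UnitSquare

section Survival

variable {Ω : Type*} [MeasurableSpace Ω] (P : Measure Ω) [IsProbabilityMeasure P]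
  {X : Ω → ℝ × ℝ}

theorem measureReal_lt_fst_eq (hX : Measurable X) (hX₂ : ∀ ω, (X ω).2 ≤ 1) (s : ℝ) :
    P.real {ω | s < (X ω).1} = 1 - P.real {ω | (X ω).1 ≤ s ∧ (X ω).2 ≤ 1} := by
  have hset : {ω | (X ω).1 ≤ s ∧ (X ω).2 ≤ 1} = {ω | (X ω).1 ≤ s} := by
    ext ω; simp [hX₂ ω]
  rw [hset, ← probReal_compl_eq_one_sub (measurableSet_le hX.fst measurable_const)]
  congr 1; ext ω; simp

theorem measureReal_lt_snd_eq (hX : Measurable X) (hX₁ : ∀ ω, (X ω).1 ≤ 1) (t : ℝ) :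
    P.real {ω | t < (X ω).2} = 1 - P.real {ω | (X ω).1 ≤ 1 ∧ (X ω).2 ≤ t} := by
  have hset : {ω | (X ω).1 ≤ 1 ∧ (X ω).2 ≤ t} = {ω | (X ω).2 ≤ t} := by
    ext ω; simp [hX₁ ω]
  rw [hset, ← probReal_compl_eq_one_sub (measurableSet_le hX.snd measurable_const)]
  congr 1; ext ω; simp

theorem measureReal_lt_fst_and_lt_snd_eq (hX : Measurable X) (hX₁ : ∀ ω, (X ω).1 ≤ 1)
    (hX₂ : ∀ ω, (X ω).2 ≤ 1) (s t : ℝ) :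
    P.real {ω | s < (X ω).1 ∧ t < (X ω).2}
      = 1 - (P.real {ω | (X ω).1 ≤ s ∧ (X ω).2 ≤ 1} + P.real {ω | (X ω).1 ≤ 1 ∧ (X ω).2 ≤ t}
        - P.real {ω | (X ω).1 ≤ s ∧ (X ω).2 ≤ t}) := by
  have hA : {ω | (X ω).1 ≤ s ∧ (X ω).2 ≤ 1} = {ω | (X ω).1 ≤ s} := by
    ext ω; simp [hX₂ ω]
  have hB : {ω | (X ω).1 ≤ 1 ∧ (X ω).2 ≤ t} = {ω | (X ω).2 ≤ t} := by
    ext ω; simp [hX₁ ω]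
  have hB_meas : MeasurableSet {ω | (X ω).2 ≤ t} := measurableSet_le hX.snd measurable_const
  have hcompl : {ω | s < (X ω).1 ∧ t < (X ω).2} = ({ω | (X ω).1 ≤ s} ∪ {ω | (X ω).2 ≤ t})ᶜ := by
    ext ω; simp
  have hinter : {ω | (X ω).1 ≤ s} ∩ {ω | (X ω).2 ≤ t} = {ω | (X ω).1 ≤ s ∧ (X ω).2 ≤ t} := rfl
  have hunion := measureReal_union_add_inter (μ := P) (s := {ω | (X ω).1 ≤ s}) hB_meas
  rw [hinter] at hunion
  rw [hA, hB, hcompl, probReal_compl_eq_one_sub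
    ((measurableSet_le hX.fst measurable_const).union hB_meas)]
  linarith

end Survival

/-- **First order bivariate stochastic dominance over the supermodular class `Φ⁺`.**
`(X₁,Y₁)` and `(X₂,Y₂)` are random vectors with values in the unit square with
cdfs `F₁`, `F₂`, marginals `Fᵢ^X(x) = Fᵢ(x,1)`, `Fᵢ^Y(y) = Fᵢ(1,y)`, and
associated functions `Kᵢ(s,t) = Fᵢ^X(s) + Fᵢ^Y(t) − Fᵢ(s,t)`.  If
`K₁ ≤ K₂`, `F₁^X ≤ F₂^X` and `F₁^Y ≤ F₂^Y` on the unit square, then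
`E[φ(X₁,Y₁)] ≥ E[φ(X₂,Y₂)]` for every `φ : ℝ² → ℝ` that is `C²` on an open
connected set `Ω ⊇ [0,1]²`, increasing in each argument, and supermodular
(`∂²φ/∂x∂y ≥ 0` on `Ω`). -/
theorem first_order_bivariate_SD_supermodular
    {α : Type*} [MeasurableSpace α] (ℙ : Measure α) [IsProbabilityMeasure ℙ]
    (V W : α → ℝ × ℝ) (hV : Measurable V) (hW : Measurable W)
    (hVr : ∀ ω, V ω ∈ Icc (0:ℝ) 1 ×ˢ Icc (0:ℝ) 1)
    (hWr : ∀ ω, W ω ∈ Icc (0:ℝ) 1 ×ˢ Icc (0:ℝ) 1)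
    (F₁ F₂ : ℝ → ℝ → ℝ)
    (hF₁ : ∀ s t : ℝ, F₁ s t = (ℙ {ω | (V ω).1 ≤ s ∧ (V ω).2 ≤ t}).toReal)
    (hF₂ : ∀ s t : ℝ, F₂ s t = (ℙ {ω | (W ω).1 ≤ s ∧ (W ω).2 ≤ t}).toReal)
    (K₁ K₂ : ℝ → ℝ → ℝ)
    (hK₁ : ∀ s t : ℝ, K₁ s t = F₁ s 1 + F₁ 1 t - F₁ s t)
    (hK₂ : ∀ s t : ℝ, K₂ s t = F₂ s 1 + F₂ 1 t - F₂ s t)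
    (hdomK : ∀ s ∈ Icc (0:ℝ) 1, ∀ t ∈ Icc (0:ℝ) 1, K₁ s t ≤ K₂ s t)
    (hdomX : ∀ s ∈ Icc (0:ℝ) 1, F₁ s 1 ≤ F₂ s 1)
    (hdomY : ∀ t ∈ Icc (0:ℝ) 1, F₁ 1 t ≤ F₂ 1 t) :
    ∀ φ : ℝ → ℝ → ℝ,
      (∃ U : Set (ℝ × ℝ), IsOpen U ∧ IsConnected U ∧
          Icc (0:ℝ) 1 ×ˢ Icc (0:ℝ) 1 ⊆ U ∧
          ContDiffOn ℝ 2 (fun q : ℝ × ℝ => φ q.1 q.2) U ∧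
          -- supermodularity: ∂²φ/∂x∂y ≥ 0 on Ω
          (∀ q ∈ U, 0 ≤ deriv (fun x => deriv (fun y => φ x y) q.2) q.1)) →
      (∀ y : ℝ, Monotone fun x => φ x y) →
      (∀ x : ℝ, Monotone fun y => φ x y) →
      ∫ ω, φ (W ω).1 (W ω).2 ∂ℙ ≤ ∫ ω, φ (V ω).1 (V ω).2 ∂ℙ := by
  rintro φ ⟨U, hU, -, hsq, hφ, hmixed⟩ hmono₁ hmono₂
  simp only [← measureReal_def] at hF₁ hF₂
  have hdiff : ∀ q ∈ Icc (0:ℝ) 1 ×ˢ Icc (0:ℝ) 1,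
      DifferentiableAt ℝ (fun q : ℝ × ℝ => φ q.1 q.2) q := fun q hq =>
    (hφ.contDiffAt (hU.mem_nhds (hsq hq))).differentiableAt two_ne_zero
  have h0 : (0:ℝ) ∈ Icc (0:ℝ) 1 := left_mem_Icc.2 zero_le_one
  refine integral_comp_le_of_survival_le hU hφ hsq ℙ hV ?_ ?_ ?_ hVr ℙ hW hWr ?_ ?_ ?_
  · exact fun s hs => (hdiff _ ⟨hs, h0⟩).hasDerivAt_partialFst.nonneg_of_monotone (hmono₁ 0)
  · exact fun t ht => (hdiff _ ⟨h0, ht⟩).hasDerivAt_partialSnd.nonneg_of_monotone (hmono₂ 0)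
  · intro q hq
    rw [partialFst_partialSnd_eq_deriv_deriv hU hφ (hsq hq)]
    exact hmixed q (hsq hq)
  · intro s hs
    rw [measureReal_lt_fst_eq ℙ hW (fun ω => (hWr ω).2.2), measureReal_lt_fst_eq ℙ hV
      (fun ω => (hVr ω).2.2), ← hF₁, ← hF₂]
    linarith [hdomX s hs]
  · intro t ht
    rw [measureReal_lt_snd_eq ℙ hW (fun ω => (hWr ω).1.2), measureReal_lt_snd_eq ℙ hV
      (fun ω => (hVr ω).1.2), ← hF₁, ← hF₂]
    linarith [hdomY t ht]
  · rintro ⟨s, t⟩ ⟨hs, ht⟩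
    rw [measureReal_lt_fst_and_lt_snd_eq ℙ hW (fun ω => (hWr ω).1.2) (fun ω => (hWr ω).2.2),
      measureReal_lt_fst_and_lt_snd_eq ℙ hV (fun ω => (hVr ω).1.2) (fun ω => (hVr ω).2.2)]
    simp only [← hF₁, ← hF₂]
    linarith [hdomK s hs t ht, hK₁ s t, hK₂ s t]
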